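/- arXiv:1210.8214 — 3 statements merged into one kernel-verified Lean document; each statement's English description precedes it below -/
import Mathlib

section
/- For t ≥ 0 and |ξ| > 4, setting Ξ = √(1 - 4/|ξ|²), λ₊ = -2/(1+Ξ), λ₋ = -(1+Ξ)|ξ|²/2, the quantity Ω₂ = (e^{tλ₊} - e^{tλ₋})/(2Ξ) satisfies |Ω₂| ≤ e^{-t}. -/
/-- For t ≥ 0 and |ξ| > 4, with Ξ = √(1-4/|ξ|²), λ₊ = -2/(1+Ξ), λ₋ = -(1+Ξ)|ξ|²/2,
the quantity Ω₂ = (e^{tλ₊} - e^{tλ₋})/(2Ξ) satisfies |Ω₂| ≤ e^{-t}. -/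
theorem stmt2 (t : ℝ) (ht : 0 ≤ t) (ξ : EuclideanSpace ℝ (Fin 3)) (hξ : 4 < ‖ξ‖)
    (Ξ lp lm : ℝ) (hΞ : Ξ = Real.sqrt (1 - 4 / ‖ξ‖ ^ 2))
    (hlp : lp = -2 / (1 + Ξ)) (hlm : lm = -((1 + Ξ) * ‖ξ‖ ^ 2) / 2) :
    |(Real.exp (t * lp) - Real.exp (t * lm)) / (2 * Ξ)| ≤ Real.exp (-t) := by
  have h0 : (0:ℝ) < ‖ξ‖ ^ 2 := by positivity
  have hns : (16:ℝ) < ‖ξ‖ ^ 2 := by nlinarith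
  have hd : 4 / ‖ξ‖ ^ 2 < 1/4 := by
    rw [div_lt_div_iff₀ h0 (by norm_num)]; linarith
  have hdpos : 0 ≤ 4 / ‖ξ‖ ^ 2 := by positivity
  have hΞ1 : Ξ ≤ 1 := by
    rw [hΞ]; exact Real.sqrt_le_one.mpr (by linarith)
  have hΞh : 1/2 < Ξ := by
    rw [hΞ, show ((1:ℝ)/2) = Real.sqrt ((1/2)^2) by
      rw [Real.sqrt_sq]; norm_num]
    apply Real.sqrt_lt_sqrt (by positivity)
    norm_num; linarith
  have h1Ξ : (0:ℝ) < 1 + Ξ := by linarith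
  have hlp1 : lp ≤ -1 := by
    rw [hlp, div_le_iff₀ h1Ξ]; linarith
  have hlp2 : -2 ≤ lp := by
    rw [hlp, le_div_iff₀ h1Ξ]; nlinarith
  have hlm8 : lm ≤ -8 := by
    rw [hlm]; rw [div_le_iff₀ (by norm_num : (0:ℝ) < 2)]; nlinarith
  have hmle : t * lm ≤ t * lp := by nlinarith
  have hE1 : Real.exp (t * lm) ≤ Real.exp (t * lp) := Real.exp_le_exp.mpr hmle
  have hEnum : 0 ≤ Real.exp (t * lp) - Real.exp (t * lm) := by linarith
  have htop : Real.exp (t * lp) ≤ Real.exp (-t) := by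
    apply Real.exp_le_exp.mpr; nlinarith
  have hnum : Real.exp (t * lp) - Real.exp (t * lm) ≤ Real.exp (-t) := by
    have := Real.exp_pos (t * lm); linarith
  rw [abs_of_nonneg (div_nonneg hEnum (by linarith))]
  calc (Real.exp (t * lp) - Real.exp (t * lm)) / (2 * Ξ)
      ≤ Real.exp (t * lp) - Real.exp (t * lm) := div_le_self hEnum (by linarith)
    _ ≤ Real.exp (-t) := hnum
end

section
/- For t ≥ 0 and |ξ| > 4, setting Ξ = √(1 - 4/|ξ|²), λ₊ = -2/(1+Ξ), λ₋ = -(1+Ξ)|ξ|²/2, the quantity m₁ = (e^{tλ₋} + e^{tλ₊})/2 + (e^{tλ₋} - e^{tλ₊})/(2Ξ) satisfies |m₁| ≤ 2 e^{-t|ξ|²/2} + 3 e^{-t}/(1 + |ξ|²). -/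
/-!
Rewriting `m₁ = ((1+Ξ)/(2Ξ)) e^{tλ₋} - ((1-Ξ)/(2Ξ)) e^{tλ₊}`, it suffices to bound each
coefficient and each exponential separately. Since `λ₋ ≤ -|ξ|²/2` and `λ₊ ≤ -1`, the
exponentials are controlled by `e^{-t|ξ|²/2}` and `e^{-t}`. The coefficient `(1+Ξ)/(2Ξ)` is at
most `2` because `Ξ ≥ 3/4`, and the small coefficient `(1-Ξ)/(2Ξ)` is `O(1/|ξ|²)` because
`(1-Ξ)(1+Ξ)|ξ|² = 4`.
-/

open Real

theorem abs_mul_sub_mul_le_of_le {α β x y A B X Y : ℝ}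
    (hα : 0 ≤ α) (hαA : α ≤ A) (hβ : 0 ≤ β) (hβB : β ≤ B)
    (hx : 0 ≤ x) (hxX : x ≤ X) (hy : 0 ≤ y) (hyY : y ≤ Y) :
    |α * x - β * y| ≤ A * X + B * Y :=
  calc |α * x - β * y| ≤ |α * x| + |β * y| := abs_sub _ _
    _ = α * x + β * y := by
      rw [abs_of_nonneg (by positivity), abs_of_nonneg (by positivity)]
    _ ≤ A * X + B * Y := by gcongr <;> linarith

theorem half_add_div_two_mul_eq {a b Ξ : ℝ} (hΞ : Ξ ≠ 0) :
    (a + b) / 2 + (a - b) / (2 * Ξ) = (1 + Ξ) / (2 * Ξ) * a - (1 - Ξ) / (2 * Ξ) * b := by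
  field_simp
  ring

section Xi

variable {r Ξ : ℝ}

theorem three_quarters_le_sqrt_one_sub (hr : 16 ≤ r ^ 2) : 3 / 4 ≤ √(1 - 4 / r ^ 2) := by
  have : 4 / r ^ 2 ≤ 1 / 4 := by
    rw [div_le_div_iff₀ (by positivity) (by norm_num)]
    linarith
  rw [Real.le_sqrt (by norm_num) (by linarith)]
  linarith

theorem one_sub_mul_one_add_mul_sq (hr : 4 ≤ r ^ 2) (hΞ : Ξ = √(1 - 4 / r ^ 2)) :
    (1 - Ξ) * (1 + Ξ) * r ^ 2 = 4 := by
  have hr0 : r ^ 2 ≠ 0 := by positivity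
  have hsq : Ξ ^ 2 = 1 - 4 / r ^ 2 := by
    rw [hΞ, Real.sq_sqrt]
    rw [sub_nonneg, div_le_one (by positivity)]
    exact hr
  have : Ξ ^ 2 * r ^ 2 = r ^ 2 - 4 := by
    rw [hsq, sub_mul, one_mul, div_mul_cancel₀ _ hr0]
  linear_combination -this

theorem one_add_div_two_mul_le_two (hΞ : 1 / 3 ≤ Ξ) : (1 + Ξ) / (2 * Ξ) ≤ 2 := by
  rw [div_le_iff₀ (by linarith)]
  linarith

theorem one_sub_div_two_mul_le (hΞ : 3 / 4 ≤ Ξ) (hΞ1 : Ξ ≤ 1)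
    (hprod : (1 - Ξ) * (1 + Ξ) * r ^ 2 = 4) : (1 - Ξ) / (2 * Ξ) ≤ 3 / (1 + r ^ 2) := by
  rw [div_le_div_iff₀ (by linarith) (by positivity)]
  nlinarith [mul_nonneg (mul_nonneg (sub_nonneg.2 hΞ1) (sq_nonneg r))
    (by linarith : (0:ℝ) ≤ Ξ - 3 / 4)]

end Xi

theorem exp_mul_neg_one_add_mul_div_two_le {t Ξ s : ℝ} (ht : 0 ≤ t) (hΞ : 0 ≤ Ξ)
    (hs : 0 ≤ s) :
    exp (t * (-((1 + Ξ) * s) / 2)) ≤ exp (-(t * s) / 2) := by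
  gcongr
  nlinarith [mul_nonneg (mul_nonneg ht hΞ) hs]

theorem exp_mul_neg_two_div_one_add_le {t Ξ : ℝ} (ht : 0 ≤ t) (hΞ : 0 ≤ Ξ)
    (hΞ1 : Ξ ≤ 1) :
    exp (t * (-2 / (1 + Ξ))) ≤ exp (-t) := by
  gcongr
  rw [mul_div_assoc', div_le_iff₀ (by linarith)]
  nlinarith

/-- For t ≥ 0 and |ξ| > 4, with Ξ = √(1-4/|ξ|²), λ₊ = -2/(1+Ξ), λ₋ = -(1+Ξ)|ξ|²/2,
the quantity m₁ = (e^{tλ₋}+e^{tλ₊})/2 + (e^{tλ₋}-e^{tλ₊})/(2Ξ) satisfies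
|m₁| ≤ 2e^{-t|ξ|²/2} + 3e^{-t}/(1+|ξ|²). -/
theorem stmt3 (t : ℝ) (ht : 0 ≤ t) (ξ : EuclideanSpace ℝ (Fin 3)) (hξ : 4 < ‖ξ‖)
    (Ξ lp lm : ℝ) (hΞ : Ξ = Real.sqrt (1 - 4 / ‖ξ‖ ^ 2))
    (hlp : lp = -2 / (1 + Ξ)) (hlm : lm = -((1 + Ξ) * ‖ξ‖ ^ 2) / 2) :
    |(Real.exp (t * lm) + Real.exp (t * lp)) / 2
      + (Real.exp (t * lm) - Real.exp (t * lp)) / (2 * Ξ)|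
      ≤ 2 * Real.exp (-(t * ‖ξ‖ ^ 2) / 2) + 3 * Real.exp (-t) / (1 + ‖ξ‖ ^ 2) := by
  have hsq : 16 ≤ ‖ξ‖ ^ 2 := by nlinarith
  have hΞ34 : 3 / 4 ≤ Ξ := hΞ ▸ three_quarters_le_sqrt_one_sub hsq
  have hΞ1 : Ξ ≤ 1 := hΞ ▸ Real.sqrt_le_one.2 (sub_le_self _ (by positivity))
  have hprod := one_sub_mul_one_add_mul_sq (by linarith) hΞ
  rw [half_add_div_two_mul_eq (by linarith), mul_div_right_comm 3]
  subst hlp hlm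
  exact abs_mul_sub_mul_le_of_le (by positivity) (one_add_div_two_mul_le_two (by linarith))
    (div_nonneg (by linarith) (by linarith)) (one_sub_div_two_mul_le hΞ34 hΞ1 hprod)
    (exp_pos _).le (exp_mul_neg_one_add_mul_div_two_le ht (by linarith) (sq_nonneg _))
    (exp_pos _).le (exp_mul_neg_two_div_one_add_le ht (by linarith) hΞ1)
end

section
/- For t ≥ 0 and 2 < |ξ| ≤ 4, setting Ξ = √(1 - 4/|ξ|²), λ₊ = -2/(1+Ξ), λ₋ = -(1+Ξ)|ξ|²/2, the quantities Ω₁ = (e^{tλ₋} + e^{tλ₊})/2 and Ω₂ = (e^{tλ₊} - e^{tλ₋})/(2Ξ) satisfy |Ω₁| ≤ e^{-t} and |Ω₂| ≤ 16 e^{-t/2}. -/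
set_option maxHeartbeats 1000000


/-- For t ≥ 0 and 2 < |ξ| ≤ 4, with Ξ = √(1-4/|ξ|²), λ₊ = -2/(1+Ξ), λ₋ = -(1+Ξ)|ξ|²/2,
the quantities Ω₁ = (e^{tλ₋}+e^{tλ₊})/2 and Ω₂ = (e^{tλ₊}-e^{tλ₋})/(2Ξ) satisfy
|Ω₁| ≤ e^{-t} and |Ω₂| ≤ 16 e^{-t/2}. -/
theorem stmt4 (t : ℝ) (ht : 0 ≤ t) (ξ : EuclideanSpace ℝ (Fin 3))
    (hξ : 2 < ‖ξ‖) (hξ' : ‖ξ‖ ≤ 4)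
    (Ξ lp lm : ℝ) (hΞ : Ξ = Real.sqrt (1 - 4 / ‖ξ‖ ^ 2))
    (hlp : lp = -2 / (1 + Ξ)) (hlm : lm = -((1 + Ξ) * ‖ξ‖ ^ 2) / 2) :
    |(Real.exp (t * lm) + Real.exp (t * lp)) / 2| ≤ Real.exp (-t) ∧
    |(Real.exp (t * lp) - Real.exp (t * lm)) / (2 * Ξ)| ≤ 16 * Real.exp (-t / 2) := by
  set R : ℝ := ‖ξ‖ with hR
  clear_value R
  have hr0 : (0:ℝ) < R := by linarith
  have hr2 : (0:ℝ) < R^2 := by positivity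
  have hr16 : R^2 ≤ 16 := by nlinarith
  have h4lt : 4 / R^2 < 1 := by rw [div_lt_one hr2]; nlinarith
  have h4nn : (0:ℝ) ≤ 1 - 4 / R^2 := by linarith
  have hΞ0 : 0 < Ξ := by rw [hΞ]; exact Real.sqrt_pos.2 (by linarith)
  have hΞsq : Ξ^2 = 1 - 4/R^2 := by rw [hΞ, Real.sq_sqrt h4nn]
  have h4pos : 0 < 4 / R^2 := by positivity
  have hΞ1 : Ξ < 1 := by nlinarith
  have hcan : 4 / R^2 * R^2 = 4 := div_mul_cancel₀ _ (ne_of_gt hr2)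
  have hlp' : lp = -((1-Ξ)*R^2)/2 := by
    have hne : (1:ℝ) + Ξ ≠ 0 := by linarith
    rw [hlp]
    field_simp
    nlinarith
  have hlp1 : lp ≤ -1 := by
    rw [hlp, div_le_iff₀ (by linarith : (0:ℝ) < 1+Ξ)]; linarith
  have hlmlp : lm ≤ lp := by rw [hlm, hlp']; nlinarith
  have htlmlp : t * lm ≤ t * lp := mul_le_mul_of_nonneg_left hlmlp ht
  have htlp : t * lp ≤ -t := by nlinarith
  have htlm : t * lm ≤ -t := le_trans htlmlp htlp
  have hB : Real.exp (t*lp) ≤ Real.exp (-t) := Real.exp_le_exp.2 htlp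
  have hA : Real.exp (t*lm) ≤ Real.exp (-t) := Real.exp_le_exp.2 htlm
  have hAB : Real.exp (t*lm) ≤ Real.exp (t*lp) := Real.exp_le_exp.2 htlmlp
  constructor
  · rw [abs_of_nonneg (by positivity)]
    linarith
  · rw [abs_of_nonneg (div_nonneg (by linarith) (by linarith))]
    rw [div_le_iff₀ (by linarith : (0:ℝ) < 2*Ξ)]
    have hkey : Real.exp (t*lp) - Real.exp (t*lm) ≤ Real.exp (t*lp) * (t*(lp - lm)) := by
      have h1 := Real.add_one_le_exp (t*lm - t*lp)
      have h2 : Real.exp (t*lp) * Real.exp (t*lm - t*lp) = Real.exp (t*lm) := by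
        rw [← Real.exp_add]; congr 1; ring
      nlinarith [Real.exp_pos (t*lp),
        mul_le_mul_of_nonneg_left h1 (Real.exp_nonneg (t*lp))]
    have hdiff : lp - lm = Ξ * R^2 := by rw [hlp', hlm]; ring
    have htE : t * Real.exp (-t) ≤ 2 * Real.exp (-t/2) := by
      have h1 := Real.add_one_le_exp (t/2)
      have h2 : Real.exp (t/2) * Real.exp (-t) = Real.exp (-t/2) := by
        rw [← Real.exp_add]; congr 1; ring
      nlinarith [Real.exp_pos (-t), Real.exp_pos (t/2)]
    calc Real.exp (t*lp) - Real.exp (t*lm)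
        ≤ Real.exp (t*lp) * (t*(Ξ*R^2)) := by
          rw [show Ξ*R^2 = lp - lm from hdiff.symm]; exact hkey
      _ ≤ Real.exp (-t) * (t*(Ξ*16)) := by
          have hx : 0 ≤ t*(Ξ*R^2) := mul_nonneg ht (mul_nonneg hΞ0.le hr2.le)
          have h1 : t*(Ξ*R^2) ≤ t*(Ξ*16) := by nlinarith
          exact mul_le_mul hB h1 hx (Real.exp_nonneg _)
      _ ≤ 16 * Real.exp (-t/2) * (2*Ξ) := by
          nlinarith [mul_le_mul_of_nonneg_right htE hΞ0.le]
end
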